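/- arXiv:2012.02390 — 4 statements merged into one kernel-verified Lean document; each statement's English description precedes it below -/
import Mathlib

section
/- Let Y₀, Y₁ be integrable random variables with quantile functions Q₀, Q₁, and let Δ⁻ be a random variable distributed as Q₁(V) − Q₀(1−V) for V uniform on [0,1] (the countermonotonic treatment effect). Then for every joint coupling (Ŷ₀, Ŷ₁) with the given marginals, the difference Δ = Ŷ₁ − Ŷ₀ satisfies I_Δ(q) ≥ I_{Δ⁻}(q) for all q ∈ [0,1], i.e., Δ ⪰_SSD Δ⁻. -/
open MeasureTheory ProbabilityTheory Set

/-- Quantile function of a measure on ℝ. -/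
noncomputable def quantileFn (μ : Measure ℝ) (q : ℝ) : ℝ :=
  sInf {x : ℝ | q ≤ (μ (Set.Iic x)).toReal}

/-- Integrated quantile function. -/
noncomputable def iqf (μ : Measure ℝ) (q : ℝ) : ℝ :=
  ∫ s in (0:ℝ)..q, quantileFn μ s

/-- The uniform distribution on `[0,1]`. -/
noncomputable def unif01 : Measure ℝ := volume.restrict (Set.Icc (0:ℝ) 1)

/-!
For `0 < q < 1` the integrated quantile function has the variational form
`I_X(q) = max_c (q c - E (c - X)⁺)`, the maximum being attained at `c = Q_X(q)`.
For `Δ = Y₁ - Y₀` take `c = Q₁(q) - Q₀(1 - q)`: since `(c₁ - c₀ - Δ)⁺ ≤ (c₁ - Y₁)⁺ + (Y₀ - c₀)⁺`,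
the lower bound `q c - E (c - Δ)⁺` only involves the marginals, and by the equality case for each
of them it equals `∫₀^q (Q₁(s) - Q₀(1 - s)) ds`, whatever the coupling. On the other side,
`v ↦ Q₁(v) - Q₀(1 - v)` is nondecreasing, so the quantile function of its law under `U[0,1]`
lies below it and `I_{Δ⁻}(q)` is at most the same integral.
-/

instance : IsProbabilityMeasure unif01 :=
  ⟨by simp [unif01, Real.volume_Icc]⟩

lemma unif01_eq_restrict_Ioo : unif01 = volume.restrict (Ioo 0 1) :=
  (Measure.restrict_congr_set Ioo_ae_eq_Icc).symm

lemma integral_unif01 (g : ℝ → ℝ) : ∫ s, g s ∂unif01 = ∫ s in (0:ℝ)..1, g s := by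
  rw [intervalIntegral.integral_of_le zero_le_one, unif01,
    Measure.restrict_congr_set Ioc_ae_eq_Icc]

lemma MeasureTheory.Integrable.intervalIntegrable_of_unif01 {g : ℝ → ℝ}
    (hg : Integrable g unif01) {a b : ℝ} (ha : a ∈ Icc (0:ℝ) 1) (hb : b ∈ Icc (0:ℝ) 1) :
    IntervalIntegrable g volume a b := by
  rw [intervalIntegrable_iff']
  exact IntegrableOn.mono_set hg (uIcc_subset_Icc ha hb)

lemma aemeasurable_unif01_of_monotoneOn {f : ℝ → ℝ} (hf : MonotoneOn f (Ioo 0 1)) :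
    AEMeasurable f unif01 := by
  rw [unif01_eq_restrict_Ioo]
  exact aemeasurable_restrict_of_monotoneOn measurableSet_Ioo hf

lemma MeasureTheory.Integrable.id_map {α : Type*} [MeasurableSpace α] {P : Measure α} {Y : α → ℝ}
    (hY : Integrable Y P) : Integrable (fun x => x) (P.map Y) :=
  (integrable_map_measure aestronglyMeasurable_id hY.aemeasurable).2 hY

section Quantile

variable {μ : Measure ℝ} {q x : ℝ}

lemma bddBelow_setOf_le_cdf (hq : 0 < q) : BddBelow {x | q ≤ cdf μ x} := by
  obtain ⟨x₀, hx₀⟩ := ((tendsto_cdf_atBot μ).eventually (eventually_lt_nhds hq)).exists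
  exact ⟨x₀, fun y hy => not_lt.1 fun hyx => (hy.trans (monotone_cdf μ hyx.le)).not_gt hx₀⟩

lemma nonempty_setOf_le_cdf (hq : q < 1) : {x | q ≤ cdf μ x}.Nonempty :=
  let ⟨x₀, hx₀⟩ := ((tendsto_cdf_atTop μ).eventually (eventually_gt_nhds hq)).exists
  ⟨x₀, hx₀.le⟩

variable [IsProbabilityMeasure μ]

lemma quantileFn_eq_sInf_cdf : quantileFn μ q = sInf {x | q ≤ cdf μ x} := by
  simp only [quantileFn, cdf_eq_real, measureReal_def]

lemma quantileFn_le_iff (hq : q ∈ Ioo 0 1) : quantileFn μ q ≤ x ↔ q ≤ cdf μ x := by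
  rw [quantileFn_eq_sInf_cdf]
  refine ⟨fun h => ?_, fun h => csInf_le (bddBelow_setOf_le_cdf hq.1) h⟩
  have right : ∀ y ∈ Ioi x, q ≤ cdf μ y := fun y hy => by
    obtain ⟨z, hz, hzy⟩ := (csInf_lt_iff (bddBelow_setOf_le_cdf hq.1)
      (nonempty_setOf_le_cdf hq.2)).1 (h.trans_lt hy)
    exact hz.trans (monotone_cdf μ hzy.le)
  exact ge_of_tendsto (((cdf μ).right_continuous x).mono Ioi_subset_Ici_self).tendsto
    (eventually_nhdsWithin_of_forall right)

lemma monotoneOn_quantileFn : MonotoneOn (quantileFn μ) (Ioo 0 1) := fun a ha b hb hab => by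
  simp only [quantileFn_eq_sInf_cdf]
  exact csInf_le_csInf (bddBelow_setOf_le_cdf ha.1) (nonempty_setOf_le_cdf hb.2)
    fun x hx => hab.trans hx

lemma map_quantileFn_unif01 : unif01.map (quantileFn μ) = μ := by
  have hQ := aemeasurable_unif01_of_monotoneOn (monotoneOn_quantileFn (μ := μ))
  refine Measure.ext_of_Iic _ _ fun x => ?_
  have hpre : quantileFn μ ⁻¹' Iic x ∩ Ioo 0 1 = Iic (cdf μ x) ∩ Ioo 0 1 := by
    ext v
    simp only [mem_inter_iff, mem_preimage, mem_Iic, and_congr_left_iff]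
    exact quantileFn_le_iff
  rw [Measure.map_apply_of_aemeasurable hQ measurableSet_Iic, unif01_eq_restrict_Ioo,
    Measure.restrict_apply' measurableSet_Ioo, hpre,
    measure_congr ((ae_eq_refl _).inter Ioo_ae_eq_Ioc), Iic_inter_Ioc_of_le (cdf_le_one μ x),
    Real.volume_Ioc, sub_zero, ofReal_cdf]

lemma integral_comp_quantileFn {g : ℝ → ℝ} (hg : AEStronglyMeasurable g μ) :
    ∫ x, g x ∂μ = ∫ s in (0:ℝ)..1, g (quantileFn μ s) := by
  have hQ := aemeasurable_unif01_of_monotoneOn (monotoneOn_quantileFn (μ := μ))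
  rw [← map_quantileFn_unif01 (μ := μ)] at hg
  conv_lhs => rw [← map_quantileFn_unif01 (μ := μ)]
  rw [integral_map hQ hg, integral_unif01]

lemma iqf_one : iqf μ 1 = ∫ x, x ∂μ :=
  (integral_comp_quantileFn aestronglyMeasurable_id).symm

variable (hμ : Integrable (fun x => x) μ)
include hμ

lemma integrable_quantileFn : Integrable (quantileFn μ) unif01 := by
  have hQ := aemeasurable_unif01_of_monotoneOn (monotoneOn_quantileFn (μ := μ))
  rw [← map_quantileFn_unif01 (μ := μ)] at hμ
  exact (integrable_map_measure aestronglyMeasurable_id hQ).1 hμ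

lemma integrable_max_sub_quantileFn (c : ℝ) :
    Integrable (fun s => max (c - quantileFn μ s) 0) unif01 :=
  ((integrable_const c).sub (integrable_quantileFn hμ)).pos_part

lemma integral_max_sub_eq_add (c : ℝ) (hq : q ∈ Icc 0 1) :
    ∫ x, max (c - x) 0 ∂μ = (∫ s in (0:ℝ)..q, max (c - quantileFn μ s) 0) +
      ∫ s in q..1, max (c - quantileFn μ s) 0 := by
  have hint := integrable_max_sub_quantileFn hμ c
  rw [integral_comp_quantileFn
    (by fun_prop : Continuous fun x => max (c - x) 0).aestronglyMeasurable]
  exact (intervalIntegral.integral_add_adjacent_intervals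
    (hint.intervalIntegrable_of_unif01 (left_mem_Icc.2 zero_le_one) hq)
    (hint.intervalIntegrable_of_unif01 hq (right_mem_Icc.2 zero_le_one))).symm

lemma integral_sub_quantileFn (c : ℝ) (hq : q ∈ Icc 0 1) :
    ∫ s in (0:ℝ)..q, (c - quantileFn μ s) = q * c - iqf μ q := by
  rw [intervalIntegral.integral_sub intervalIntegrable_const
    ((integrable_quantileFn hμ).intervalIntegrable_of_unif01 (left_mem_Icc.2 zero_le_one) hq),
    intervalIntegral.integral_const, smul_eq_mul, sub_zero, iqf]

lemma mul_sub_integral_max_sub_le_iqf (c : ℝ) (hq : q ∈ Icc 0 1) :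
    q * c - ∫ x, max (c - x) 0 ∂μ ≤ iqf μ q := by
  have hint := integrable_max_sub_quantileFn hμ c
  have hleft : ∫ s in (0:ℝ)..q, (c - quantileFn μ s) ≤
      ∫ s in (0:ℝ)..q, max (c - quantileFn μ s) 0 :=
    intervalIntegral.integral_mono_on hq.1
      (((integrable_const c).sub (integrable_quantileFn hμ)).intervalIntegrable_of_unif01
        (left_mem_Icc.2 zero_le_one) hq)
      (hint.intervalIntegrable_of_unif01 (left_mem_Icc.2 zero_le_one) hq)
      fun s _ => le_max_left _ _
  have hright : 0 ≤ ∫ s in q..1, max (c - quantileFn μ s) 0 :=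
    intervalIntegral.integral_nonneg hq.2 fun s _ => le_max_right _ _
  rw [integral_max_sub_eq_add hμ c hq]
  linarith [integral_sub_quantileFn hμ c hq]

lemma integral_max_quantileFn_sub (hq : q ∈ Ioo 0 1) :
    ∫ x, max (quantileFn μ q - x) 0 ∂μ = q * quantileFn μ q - iqf μ q := by
  have hq' := Ioo_subset_Icc_self hq
  have hmono := monotoneOn_quantileFn (μ := μ)
  have hleft : ∫ s in (0:ℝ)..q, max (quantileFn μ q - quantileFn μ s) 0 =
      ∫ s in (0:ℝ)..q, (quantileFn μ q - quantileFn μ s) :=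
    intervalIntegral.integral_congr_uIoo fun s hs => by
      rw [uIoo_of_le hq.1.le] at hs
      exact max_eq_left (sub_nonneg.2 (hmono ⟨hs.1, hs.2.trans hq.2⟩ hq hs.2.le))
  have hright : ∫ s in q..1, max (quantileFn μ q - quantileFn μ s) 0 = ∫ s in q..1, (0:ℝ) :=
    intervalIntegral.integral_congr_uIoo fun s hs => by
      rw [uIoo_of_le hq.2.le] at hs
      exact max_eq_right (sub_nonpos.2 (hmono hq ⟨hq.1.trans hs.1, hs.2⟩ hs.1.le))
  rw [integral_max_sub_eq_add hμ _ hq', hleft, hright, intervalIntegral.integral_zero, add_zero,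
    integral_sub_quantileFn hμ _ hq']

lemma integrable_quantileFn_one_sub : Integrable (fun s => quantileFn μ (1 - s)) unif01 := by
  have h := (((integrable_quantileFn hμ).intervalIntegrable_of_unif01
    (left_mem_Icc.2 zero_le_one) (right_mem_Icc.2 zero_le_one)).comp_sub_left 1).symm
  rw [sub_zero, sub_self, intervalIntegrable_iff_integrableOn_Icc_of_le zero_le_one] at h
  exact h

lemma integral_quantileFn_one_sub (hq : q ∈ Icc 0 1) :
    ∫ s in (0:ℝ)..q, quantileFn μ (1 - s) = iqf μ 1 - iqf μ (1 - q) := by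
  have hQ : ∀ b ∈ Icc (0:ℝ) 1, IntervalIntegrable (quantileFn μ) volume 0 b := fun b hb =>
    (integrable_quantileFn hμ).intervalIntegrable_of_unif01 (left_mem_Icc.2 zero_le_one) hb
  rw [intervalIntegral.integral_comp_sub_left, sub_zero, iqf, iqf,
    intervalIntegral.integral_interval_sub_left (hQ 1 (right_mem_Icc.2 zero_le_one))
      (hQ _ ⟨sub_nonneg.2 hq.2, sub_le_self _ hq.1⟩)]

end Quantile

lemma quantileFn_map_unif01_le {f : ℝ → ℝ} (hf : MonotoneOn f (Ioo 0 1)) {s : ℝ}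
    (hs : s ∈ Ioo 0 1) : quantileFn (unif01.map f) s ≤ f s := by
  have hfm := aemeasurable_unif01_of_monotoneOn hf
  have := Measure.isProbabilityMeasure_map hfm
  have hsub : Ioc 0 s ⊆ f ⁻¹' Iic (f s) := fun v hv => hf ⟨hv.1, hv.2.trans_lt hs.2⟩ hs hv.2
  rw [quantileFn_le_iff hs, ← ENNReal.ofReal_le_ofReal_iff (cdf_nonneg _ _), ofReal_cdf,
    Measure.map_apply_of_aemeasurable hfm measurableSet_Iic]
  calc ENNReal.ofReal s = unif01 (Ioc 0 s) := by
        rw [unif01_eq_restrict_Ioo, Measure.restrict_apply measurableSet_Ioc,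
          inter_eq_left.2 (Ioc_subset_Ioo_right hs.2), Real.volume_Ioc, sub_zero]
    _ ≤ unif01 (f ⁻¹' Iic (f s)) := measure_mono hsub

lemma iqf_map_unif01_le {f : ℝ → ℝ} (hf : MonotoneOn f (Ioo 0 1)) (hfi : Integrable f unif01)
    {q : ℝ} (hq : q ∈ Icc 0 1) : iqf (unif01.map f) q ≤ ∫ s in (0:ℝ)..q, f s := by
  have hfm := aemeasurable_unif01_of_monotoneOn hf
  have := Measure.isProbabilityMeasure_map hfm
  refine intervalIntegral.integral_mono_on_of_le_Ioo hq.1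
    ((integrable_quantileFn hfi.id_map).intervalIntegrable_of_unif01
      (left_mem_Icc.2 zero_le_one) hq)
    (hfi.intervalIntegrable_of_unif01 (left_mem_Icc.2 zero_le_one) hq)
    fun s hs => quantileFn_map_unif01_le hf ⟨hs.1, hs.2.trans_le hq.2⟩

section Coupling

variable {Ω : Type*} [MeasurableSpace Ω] {P : Measure Ω}

lemma integral_max_sub_map {Y : Ω → ℝ} (hY : AEMeasurable Y P) (c : ℝ) :
    ∫ x, max (c - x) 0 ∂(P.map Y) = ∫ ω, max (c - Y ω) 0 ∂P :=
  integral_map hY (by fun_prop : Continuous fun x : ℝ => max (c - x) 0).aestronglyMeasurable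

variable [IsProbabilityMeasure P]

lemma iqf_map_one {Y : Ω → ℝ} (hY : Integrable Y P) : iqf (P.map Y) 1 = ∫ ω, Y ω ∂P := by
  have := Measure.isProbabilityMeasure_map (μ := P) hY.aemeasurable
  rw [iqf_one]
  exact integral_map hY.aemeasurable aestronglyMeasurable_id

lemma integral_max_sub_sub_le {Y₀ Y₁ : Ω → ℝ} (h₀ : Integrable Y₀ P) (h₁ : Integrable Y₁ P)
    (c₀ c₁ : ℝ) :
    ∫ ω, max (c₁ - c₀ - (Y₁ ω - Y₀ ω)) 0 ∂P ≤
      (∫ ω, max (c₁ - Y₁ ω) 0 ∂P) + (∫ ω, max (c₀ - Y₀ ω) 0 ∂P) + ((∫ ω, Y₀ ω ∂P) - c₀) := by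
  have i₁ : Integrable (fun ω => max (c₁ - Y₁ ω) 0) P := ((integrable_const c₁).sub h₁).pos_part
  have i₀ : Integrable (fun ω => max (c₀ - Y₀ ω) 0) P := ((integrable_const c₀).sub h₀).pos_part
  have i : Integrable (fun ω => Y₀ ω - c₀) P := h₀.sub (integrable_const c₀)
  calc ∫ ω, max (c₁ - c₀ - (Y₁ ω - Y₀ ω)) 0 ∂P
      ≤ ∫ ω, (max (c₁ - Y₁ ω) 0 + max (c₀ - Y₀ ω) 0 + (Y₀ ω - c₀)) ∂P := by
        refine integral_mono ((integrable_const _).sub (h₁.sub h₀)).pos_part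
          ((i₁.add i₀).add i) fun ω => max_le ?_ ?_ <;>
        linarith [le_max_left (c₁ - Y₁ ω) 0, le_max_right (c₁ - Y₁ ω) 0,
          le_max_left (c₀ - Y₀ ω) 0, le_max_right (c₀ - Y₀ ω) 0]
    _ = _ := by
        rw [integral_add ?_ i, integral_add i₁ i₀,
          integral_sub h₀ (integrable_const c₀), integral_const, probReal_univ, one_smul]
        exact i₁.add i₀

lemma integral_quantileFn_sub_quantileFn_one_sub_le_iqf_map_sub {Y₀ Y₁ : Ω → ℝ}
    (h₀ : Integrable Y₀ P) (h₁ : Integrable Y₁ P) {q : ℝ} (hq : q ∈ Icc 0 1) :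
    ∫ s in (0:ℝ)..q, (quantileFn (P.map Y₁) s - quantileFn (P.map Y₀) (1 - s)) ≤
      iqf (P.map fun ω => Y₁ ω - Y₀ ω) q := by
  have := Measure.isProbabilityMeasure_map (μ := P) h₀.aemeasurable
  have := Measure.isProbabilityMeasure_map (μ := P) h₁.aemeasurable
  have hΔ : Integrable (fun ω => Y₁ ω - Y₀ ω) P := h₁.sub h₀
  have := Measure.isProbabilityMeasure_map (μ := P) hΔ.aemeasurable
  -- `quantileFn` is a junk value at `0` and `1`, so the endpoints are treated directly.
  obtain rfl | hq0 := hq.1.eq_or_lt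
  · simp [iqf]
  rw [intervalIntegral.integral_sub
    ((integrable_quantileFn h₁.id_map).intervalIntegrable_of_unif01
      (left_mem_Icc.2 zero_le_one) hq)
    ((integrable_quantileFn_one_sub h₀.id_map).intervalIntegrable_of_unif01
      (left_mem_Icc.2 zero_le_one) hq),
    integral_quantileFn_one_sub h₀.id_map hq, iqf_map_one h₀, ← iqf]
  obtain rfl | hq1 := hq.2.eq_or_lt
  · rw [iqf_map_one h₁, sub_self, iqf_map_one hΔ, integral_sub h₁ h₀]
    simp [iqf]
  set c₁ := quantileFn (P.map Y₁) q
  set c₀ := quantileFn (P.map Y₀) (1 - q)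
  have e₁ := integral_max_quantileFn_sub h₁.id_map ⟨hq0, hq1⟩
  have e₀ := integral_max_quantileFn_sub h₀.id_map ⟨sub_pos.2 hq1, sub_lt_self _ hq0⟩
  have lb := mul_sub_integral_max_sub_le_iqf hΔ.id_map (c₁ - c₀) hq
  rw [integral_max_sub_map h₁.aemeasurable] at e₁
  rw [integral_max_sub_map h₀.aemeasurable] at e₀
  rw [integral_max_sub_map hΔ.aemeasurable] at lb
  linarith [integral_max_sub_sub_le h₀ h₁ c₀ c₁]

end Coupling

lemma monotoneOn_quantileFn_sub_quantileFn_one_sub (μ₀ μ₁ : Measure ℝ) [IsProbabilityMeasure μ₀]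
    [IsProbabilityMeasure μ₁] :
    MonotoneOn (fun v => quantileFn μ₁ v - quantileFn μ₀ (1 - v)) (Ioo 0 1) :=
  fun _ ha _ hb hab => sub_le_sub (monotoneOn_quantileFn ha hb hab)
    (monotoneOn_quantileFn ⟨sub_pos.2 hb.2, sub_lt_self _ hb.1⟩
      ⟨sub_pos.2 ha.2, sub_lt_self _ ha.1⟩ (sub_le_sub_left hab 1))

/-- for any coupling `(Y₀, Y₁)` of integrable marginals `μ₀, μ₁`,
the difference `Δ = Y₁ − Y₀` SSD-dominates the countermonotonic treatment effect
`Δ⁻ ∼ Q₁(V) − Q₀(1−V)`, `V ∼ U[0,1]`: pointwise dominance of integrated quantile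
functions on `[0,1]`. -/
theorem stmt_2 {Ω : Type*} [MeasurableSpace Ω] (P : Measure Ω) [IsProbabilityMeasure P]
    (μ₀ μ₁ : Measure ℝ) [IsProbabilityMeasure μ₀] [IsProbabilityMeasure μ₁]
    (h₀ : Integrable (fun x : ℝ => x) μ₀) (h₁ : Integrable (fun x : ℝ => x) μ₁)
    (Y₀ Y₁ : Ω → ℝ) (hY₀ : Measurable Y₀) (hY₁ : Measurable Y₁)
    (hm₀ : P.map Y₀ = μ₀) (hm₁ : P.map Y₁ = μ₁) :
    ∀ q ∈ Set.Icc (0:ℝ) 1,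
      iqf (Measure.map (fun v => quantileFn μ₁ v - quantileFn μ₀ (1 - v)) unif01) q ≤
        iqf (P.map (fun ω => Y₁ ω - Y₀ ω)) q := by
  intro q hq
  have hX₀ : Integrable Y₀ P :=
    (integrable_map_measure aestronglyMeasurable_id hY₀.aemeasurable).1 (hm₀ ▸ h₀)
  have hX₁ : Integrable Y₁ P :=
    (integrable_map_measure aestronglyMeasurable_id hY₁.aemeasurable).1 (hm₁ ▸ h₁)
  calc _ ≤ ∫ s in (0:ℝ)..q, (quantileFn μ₁ s - quantileFn μ₀ (1 - s)) :=
        iqf_map_unif01_le (monotoneOn_quantileFn_sub_quantileFn_one_sub μ₀ μ₁)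
          ((integrable_quantileFn h₁).sub (integrable_quantileFn_one_sub h₀)) hq
    _ ≤ _ := by
        subst hm₀ hm₁
        exact integral_quantileFn_sub_quantileFn_one_sub_le_iqf_map_sub hX₀ hX₁ hq
end

section
/- Area of uncertainty identity: let Δ⁻ be an integrable random variable with IQF I and mean L = I(1). Define on [p₀, p₁] (with p₀ < p₁) the functions ψ_l(p) = c + (p₁−p₀)·I((p−p₀)/(p₁−p₀)) and ψ_h(p) = c + (p₁−p₀)·L − (p₁−p₀)·I((p₁−p)/(p₁−p₀)) for a constant c. Then ∫_{p₀}^{p₁} [ψ_h(u) − ψ_l(u)] du = (p₁−p₀)² · Γ, where Γ = 2∫₀¹ [qL − I(q)] dq is the Gini mean difference of Δ⁻. -/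
/-!
Under the substitution `q = (u - p₀)/(p₁ - p₀)` the integrand becomes
`(p₁ - p₀) · (L - I(1 - q) - I(q))`, and the reflection `q ↦ 1 - q` shows
`∫₀¹ (L - I(1 - q) - I(q)) dq = L - 2∫₀¹ I = 2∫₀¹ (qL - I(q)) dq`.
The only analytic input is that `I` is integrable on `[0, 1]`: by the probability integral
transform the quantile function pushes Lebesgue measure on `(0, 1)` forward to `ν`, so it is
integrable there as soon as `ν` has a first moment, and `I` is then continuous on `[0, 1]`.
-/

open MeasureTheory ProbabilityTheory Set Filter Topology

lemma volume_Ioo_zero_one_inter_Iic {t : ℝ} (h1 : t ≤ 1) :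
    volume (Ioo 0 1 ∩ Iic t) = ENNReal.ofReal t := by
  rcases h1.lt_or_eq with h1 | rfl
  · rw [show Ioo 0 1 ∩ Iic t = Ioc 0 t by
      ext s; exact ⟨fun ⟨⟨h0, _⟩, h⟩ => ⟨h0, h⟩, fun ⟨h0, h⟩ => ⟨⟨h0, h.trans_lt h1⟩, h⟩⟩,
      Real.volume_Ioc, sub_zero]
  · rw [inter_eq_left.mpr fun s hs => hs.2.le, Real.volume_Ioo, sub_zero]

section Quantile

variable (ν : Measure ℝ)

lemma nonempty_setOf_le_cdf_s10 {s : ℝ} (hs : s < 1) : {x : ℝ | s ≤ cdf ν x}.Nonempty :=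
  ((tendsto_cdf_atTop ν).eventually (eventually_ge_nhds hs)).exists

lemma bddBelow_setOf_le_cdf_s10 {s : ℝ} (hs : 0 < s) : BddBelow {x : ℝ | s ≤ cdf ν x} := by
  obtain ⟨x₀, hx₀⟩ := ((tendsto_cdf_atBot ν).eventually (eventually_lt_nhds hs)).exists
  exact ⟨x₀, fun y hy => le_of_not_gt fun hyx => (hy.trans (monotone_cdf ν hyx.le)).not_gt hx₀⟩

variable [IsProbabilityMeasure ν]

lemma quantileFn_eq_sInf (s : ℝ) : quantileFn ν s = sInf {x : ℝ | s ≤ cdf ν x} := by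
  simp_rw [quantileFn, cdf_eq_real, measureReal_def]

lemma le_cdf_quantileFn {s : ℝ} (h0 : 0 < s) (h1 : s < 1) : s ≤ cdf ν (quantileFn ν s) := by
  rw [quantileFn_eq_sInf]
  set Q := sInf {x : ℝ | s ≤ cdf ν x}
  have h_right : ∀ y ∈ Ioi Q, s ≤ cdf ν y := fun y hy => by
    obtain ⟨z, hz, hzy⟩ :=
      (csInf_lt_iff (bddBelow_setOf_le_cdf_s10 ν h0) (nonempty_setOf_le_cdf_s10 ν h1)).mp hy
    exact hz.trans (monotone_cdf ν hzy.le)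
  have h_lim : Tendsto (cdf ν) (𝓝[>] Q) (𝓝 (cdf ν Q)) :=
    ((cdf ν).right_continuous Q).mono_left (nhdsWithin_mono _ Ioi_subset_Ici_self)
  exact ge_of_tendsto h_lim (eventually_nhdsWithin_of_forall h_right)

lemma quantileFn_le_iff_s10 {s x : ℝ} (h0 : 0 < s) (h1 : s < 1) :
    quantileFn ν s ≤ x ↔ s ≤ cdf ν x :=
  ⟨fun h => (le_cdf_quantileFn ν h0 h1).trans (monotone_cdf ν h),
    fun h => (quantileFn_eq_sInf ν s).trans_le (csInf_le (bddBelow_setOf_le_cdf_s10 ν h0) h)⟩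

lemma quantileFn_monotoneOn : MonotoneOn (quantileFn ν) (Ioo 0 1) := fun s hs t ht hst => by
  rw [quantileFn_eq_sInf, quantileFn_eq_sInf]
  exact csInf_le_csInf (bddBelow_setOf_le_cdf_s10 ν hs.1) (nonempty_setOf_le_cdf_s10 ν ht.2)
    fun x hx => hst.trans hx

lemma aemeasurable_quantileFn : AEMeasurable (quantileFn ν) (volume.restrict (Ioo 0 1)) :=
  aemeasurable_restrict_of_monotoneOn measurableSet_Ioo (quantileFn_monotoneOn ν)

lemma quantileFn_preimage_Iic_inter_Ioo (x : ℝ) :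
    quantileFn ν ⁻¹' Iic x ∩ Ioo 0 1 = Ioo 0 1 ∩ Iic (cdf ν x) := by
  ext s
  exact ⟨fun ⟨h, hs⟩ => ⟨hs, (quantileFn_le_iff_s10 ν hs.1 hs.2).mp h⟩,
    fun ⟨hs, h⟩ => ⟨(quantileFn_le_iff_s10 ν hs.1 hs.2).mpr h, hs⟩⟩

theorem map_quantileFn_volume_Ioo : (volume.restrict (Ioo 0 1)).map (quantileFn ν) = ν := by
  have : IsProbabilityMeasure (volume.restrict (Ioo (0:ℝ) 1)) := ⟨by simp⟩
  have : IsProbabilityMeasure ((volume.restrict (Ioo 0 1)).map (quantileFn ν)) :=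
    Measure.isProbabilityMeasure_map (aemeasurable_quantileFn ν)
  refine Measure.ext_of_Iic _ _ fun x => ?_
  rw [Measure.map_apply_of_aemeasurable (aemeasurable_quantileFn ν) measurableSet_Iic,
    Measure.restrict_apply' measurableSet_Ioo, quantileFn_preimage_Iic_inter_Ioo,
    volume_Ioo_zero_one_inter_Iic (cdf_le_one ν x), ofReal_cdf]

variable {ν}

lemma integrableOn_quantileFn (hν : Integrable (fun x : ℝ => x) ν) :
    IntegrableOn (quantileFn ν) (Ioo 0 1) := by
  rw [← map_quantileFn_volume_Ioo ν] at hν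
  exact (integrable_map_measure aestronglyMeasurable_id (aemeasurable_quantileFn ν)).mp hν

lemma intervalIntegrable_iqf (hν : Integrable (fun x : ℝ => x) ν) :
    IntervalIntegrable (iqf ν) volume 0 1 := by
  have h : IntegrableOn (quantileFn ν) (uIcc 0 1) := by
    rw [uIcc_of_le zero_le_one, IntegrableOn, ← Measure.restrict_congr_set Ioo_ae_eq_Icc]
    exact integrableOn_quantileFn hν
  exact (intervalIntegral.continuousOn_primitive_interval h).intervalIntegrable

end Quantile

section Rescaling

variable {E : Type*} [NormedAddCommGroup E] [NormedSpace ℝ E]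

lemma integral_comp_sub_div_sub (g : ℝ → E) (a b : ℝ) :
    ∫ u in a..b, g ((u - a) / (b - a)) = (b - a) • ∫ q in (0:ℝ)..1, g q := by
  rcases eq_or_ne b a with rfl | hab
  · simp
  have hd : b - a ≠ 0 := sub_ne_zero.mpr hab
  rw [intervalIntegral.integral_comp_sub_right (fun v => g (v / (b - a))), sub_self,
    intervalIntegral.integral_comp_div g hd, zero_div, div_self hd]

lemma integral_comp_one_sub_zero_one (f : ℝ → E) :
    ∫ q in (0:ℝ)..1, f (1 - q) = ∫ q in (0:ℝ)..1, f q := by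
  simp [intervalIntegral.integral_comp_sub_left f 1]

end Rescaling

lemma integral_sub_comp_one_sub_sub {f : ℝ → ℝ} (hf : IntervalIntegrable f volume 0 1) (L : ℝ) :
    ∫ q in (0:ℝ)..1, (L - f (1 - q) - f q) = 2 * ∫ q in (0:ℝ)..1, (q * L - f q) := by
  have hf_refl : IntervalIntegrable (fun q => f (1 - q)) volume 0 1 := by
    simpa using (hf.comp_sub_left 1).symm
  rw [intervalIntegral.integral_sub (intervalIntegrable_const.sub hf_refl) hf,
    intervalIntegral.integral_sub intervalIntegrable_const hf_refl,
    intervalIntegral.integral_sub (intervalIntegral.intervalIntegrable_id.mul_const L) hf,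
    integral_comp_one_sub_zero_one, intervalIntegral.integral_mul_const, integral_id,
    intervalIntegral.integral_const, smul_eq_mul]
  ring

theorem stmt_10_general (ν : Measure ℝ) [IsProbabilityMeasure ν]
    (hν : Integrable (fun x : ℝ => x) ν)
    (p₀ p₁ c : ℝ) :
    (∫ u in p₀..p₁,
        ((c + (p₁ - p₀) * iqf ν 1 - (p₁ - p₀) * iqf ν ((p₁ - u) / (p₁ - p₀))) -
          (c + (p₁ - p₀) * iqf ν ((u - p₀) / (p₁ - p₀))))) =
      (p₁ - p₀) ^ 2 * (2 * ∫ q in (0:ℝ)..1, (q * iqf ν 1 - iqf ν q)) := by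
  set d := p₁ - p₀
  set I := iqf ν
  have h_integrand : ∀ u, (c + d * I 1 - d * I ((p₁ - u) / d)) - (c + d * I ((u - p₀) / d))
      = d * (I 1 - I (1 - (u - p₀) / d) - I ((u - p₀) / d)) := fun u => by
    rcases eq_or_ne d 0 with hd | hd
    · simp [hd]
    · rw [show (p₁ - u) / d = 1 - (u - p₀) / d by field_simp; ring]
      ring
  have h_rescale : ∫ u in p₀..p₁, d * (I 1 - I (1 - (u - p₀) / d) - I ((u - p₀) / d))
      = d • ∫ q in (0:ℝ)..1, d * (I 1 - I (1 - q) - I q) :=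
    integral_comp_sub_div_sub (fun q => d * (I 1 - I (1 - q) - I q)) p₀ p₁
  simp_rw [h_integrand]
  rw [h_rescale, intervalIntegral.integral_const_mul,
    integral_sub_comp_one_sub_sub (intervalIntegrable_iqf hν), smul_eq_mul]
  ring

/-- area of uncertainty identity: with `I` the IQF of `Δ⁻`,
`L = I(1)`, `ψ_l(p) = c + (p₁−p₀)·I((p−p₀)/(p₁−p₀))`,
`ψ_h(p) = c + (p₁−p₀)·L − (p₁−p₀)·I((p₁−p)/(p₁−p₀))`, one has
`∫_{p₀}^{p₁} [ψ_h − ψ_l] = (p₁−p₀)² · Γ`, `Γ = 2∫₀¹ [qL − I(q)] dq`. -/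
theorem stmt_10 (ν : Measure ℝ) [IsProbabilityMeasure ν]
    (hν : Integrable (fun x : ℝ => x) ν)
    (p₀ p₁ c : ℝ) (hp : p₀ < p₁) :
    (∫ u in p₀..p₁,
        ((c + (p₁ - p₀) * iqf ν 1 - (p₁ - p₀) * iqf ν ((p₁ - u) / (p₁ - p₀))) -
          (c + (p₁ - p₀) * iqf ν ((u - p₀) / (p₁ - p₀))))) =
      (p₁ - p₀) ^ 2 * (2 * ∫ q in (0:ℝ)..1, (q * iqf ν 1 - iqf ν q)) :=
  stmt_10_general ν hν p₀ p₁ c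
end

section
/- First counter-example to sufficiency of the SSD bounds: let Y₀, Y₁ be independent with P(Y_d = 0) = P(Y_d = 1) = 1/2 for d = 0,1. The distribution F₁ on [−1,1] given by F₁(δ) = 1/3 for δ ∈ [−1, 1/2) and F₁(δ) = 1 for δ ∈ [1/2, 1] satisfies the second-order bounds Δ⁻ ⪯_SSD F₁ ⪯_SSD Δ⁺ (where Δ⁻ and Δ⁺ are the counter- and co-monotonic differences of the marginals), yet F₁ is not the distribution of Ŷ₁ − Ŷ₀ for any coupling (Ŷ₀, Ŷ₁) with these marginals, because any such difference is supported on {−1, 0, 1} while F₁ puts mass 2/3 on {1/2}. -/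
open MeasureTheory ProbabilityTheory Set

/-- Bernoulli(1/2) law on `{0,1} ⊆ ℝ`. -/
noncomputable def bern : Measure ℝ :=
  (1/2 : ENNReal) • Measure.dirac (0:ℝ) + (1/2 : ENNReal) • Measure.dirac (1:ℝ)

/-- The distribution `F₁`: mass 1/3 at −1, mass 2/3 at 1/2. -/
noncomputable def nuF1 : Measure ℝ :=
  (1/3 : ENNReal) • Measure.dirac (-1 : ℝ) + (2/3 : ENNReal) • Measure.dirac (1/2 : ℝ)

/-- The countermonotonic difference `Δ⁻`: mass 1/2 at −1 and at 1. -/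
noncomputable def nuMinus : Measure ℝ :=
  (1/2 : ENNReal) • Measure.dirac (-1 : ℝ) + (1/2 : ENNReal) • Measure.dirac (1:ℝ)

/-- The comonotonic difference `Δ⁺`: point mass at 0. -/
noncomputable def nuPlus : Measure ℝ := Measure.dirac (0:ℝ)

/-! Each of the three laws has at most two atoms. The quantile function of `a • δ_p + b • δ_r`
with `p < r` is `p` on `(0, a]` and `r` on `(a, 1]`, so every integrated quantile function here
is piecewise linear on `[0, 1]` and the SSD bounds reduce to comparing explicit affine pieces.
For a coupling of two `{0, 1}`-valued variables the difference lies a.s. in `{-1, 0, 1}`, so its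
law gives no mass to `1/2`, whereas `F₁` gives it mass `2/3`. -/

open scoped ENNReal

lemma quantileFn_eq_of_setOf_eq {μ : Measure ℝ} {s c : ℝ}
    (h : {x : ℝ | s ≤ (μ (Iic x)).toReal} = Ici c) : quantileFn μ s = c := by
  rw [quantileFn, h, csInf_Ici]

lemma quantileFn_dirac {p s : ℝ} (hs : s ∈ Ioc 0 1) : quantileFn (Measure.dirac p) s = p := by
  apply quantileFn_eq_of_setOf_eq
  ext x
  simp only [mem_ofPred_eq, mem_Ici, Measure.dirac_apply' _ measurableSet_Iic, indicator_apply,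
    mem_Iic, Pi.one_apply]
  split_ifs <;> simp only [ENNReal.toReal_one, ENNReal.toReal_zero] <;> constructor <;> intro <;>
    linarith [hs.1, hs.2]

lemma intervalIntegral_eq_of_eqOn_Ioc {f : ℝ → ℝ} {l u c : ℝ} (hlu : l ≤ u)
    (h : EqOn f (fun _ ↦ c) (Ioc l u)) : ∫ s in l..u, f s = (u - l) * c := by
  rw [intervalIntegral.integral_of_le hlu, setIntegral_congr_fun measurableSet_Ioc h,
    setIntegral_const, Real.volume_real_Ioc_of_le hlu, smul_eq_mul]

lemma intervalIntegrable_of_eqOn_Ioc {f : ℝ → ℝ} {l u c : ℝ} (hlu : l ≤ u)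
    (h : EqOn f (fun _ ↦ c) (Ioc l u)) : IntervalIntegrable f volume l u := by
  rw [intervalIntegrable_iff_integrableOn_Ioc_of_le hlu]
  exact (integrableOn_const measure_Ioc_lt_top.ne).congr_fun h.symm measurableSet_Ioc

lemma intervalIntegral_eq_of_step {f : ℝ → ℝ} {l m u c d : ℝ} (hlm : l ≤ m)
    (hmu : m ≤ u)
    (hlo : EqOn f (fun _ ↦ c) (Ioc l m)) (hhi : EqOn f (fun _ ↦ d) (Ioc m u)) :
    ∫ s in l..u, f s = (m - l) * c + (u - m) * d := by
  rw [← intervalIntegral.integral_add_adjacent_intervals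
      (intervalIntegrable_of_eqOn_Ioc hlm hlo) (intervalIntegrable_of_eqOn_Ioc hmu hhi),
    intervalIntegral_eq_of_eqOn_Ioc hlm hlo, intervalIntegral_eq_of_eqOn_Ioc hmu hhi]

lemma iqf_dirac (p : ℝ) {q : ℝ} (hq : q ∈ Icc 0 1) : iqf (Measure.dirac p) q = q * p := by
  rw [iqf, intervalIntegral_eq_of_eqOn_Ioc hq.1 fun s hs ↦
    quantileFn_dirac ⟨hs.1, hs.2.trans hq.2⟩, sub_zero]

section TwoAtom

variable {a b : ℝ≥0∞} {p r : ℝ}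

lemma toReal_twoAtom_Iic (ha : a ≠ ∞) (hb : b ≠ ∞) (x : ℝ) :
    ((a • Measure.dirac p + b • Measure.dirac r) (Iic x)).toReal =
      (if p ≤ x then a.toReal else 0) + (if r ≤ x then b.toReal else 0) := by
  simp only [Measure.coe_add, Measure.coe_smul, Pi.add_apply, Pi.smul_apply,
    Measure.dirac_apply' _ measurableSet_Iic, indicator_apply, mem_Iic, Pi.one_apply,
    smul_eq_mul, mul_ite, mul_one, mul_zero]
  rw [ENNReal.toReal_add (by split_ifs <;> simp [ha]) (by split_ifs <;> simp [hb])]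
  split_ifs <;> simp

lemma quantileFn_twoAtom (hpr : p < r) (hab : a + b = 1) {s : ℝ} (hs : s ∈ Ioc 0 1) :
    quantileFn (a • Measure.dirac p + b • Measure.dirac r) s =
      if s ≤ a.toReal then p else r := by
  have ha : a ≠ ∞ := ne_top_of_le_ne_top ENNReal.one_ne_top (hab ▸ le_self_add)
  have hb : b ≠ ∞ := ne_top_of_le_ne_top ENNReal.one_ne_top (hab ▸ le_add_self)
  have hsum : a.toReal + b.toReal = 1 := by
    rw [← ENNReal.toReal_add ha hb, hab, ENNReal.toReal_one]
  have hb0 : 0 ≤ b.toReal := ENNReal.toReal_nonneg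
  apply quantileFn_eq_of_setOf_eq
  ext x
  simp only [mem_ofPred_eq, mem_Ici, toReal_twoAtom_Iic ha hb]
  split_ifs <;> constructor <;> intro <;> linarith [hs.1, hs.2]

lemma iqf_twoAtom (hpr : p < r) (hab : a + b = 1) {q : ℝ} (hq : q ∈ Icc 0 1) :
    iqf (a • Measure.dirac p + b • Measure.dirac r) q =
      if q ≤ a.toReal then q * p else a.toReal * p + (q - a.toReal) * r := by
  have hquant := fun s (hs : s ∈ Ioc 0 q) ↦
    quantileFn_twoAtom hpr hab ⟨hs.1, hs.2.trans hq.2⟩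
  split_ifs with hqa
  · rw [iqf, intervalIntegral_eq_of_eqOn_Ioc (c := p) hq.1 fun s hs ↦ by
      simp [hquant s hs, hs.2.trans hqa], sub_zero]
  · rw [not_le] at hqa
    rw [iqf, intervalIntegral_eq_of_step (c := p) (d := r) ENNReal.toReal_nonneg hqa.le
      (fun s hs ↦ by simp [hquant s ⟨hs.1, hs.2.trans hqa.le⟩, hs.2])
      (fun s hs ↦ by
        simp [hquant s ⟨ENNReal.toReal_nonneg.trans_lt hs.1, hs.2⟩, not_le.2 hs.1]),
      sub_zero]

end TwoAtom

lemma iqf_nuPlus {q : ℝ} (hq : q ∈ Icc 0 1) : iqf nuPlus q = 0 := by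
  rw [nuPlus, iqf_dirac 0 hq, mul_zero]

lemma iqf_nuMinus {q : ℝ} (hq : q ∈ Icc 0 1) :
    iqf nuMinus q = if q ≤ 1 / 2 then -q else q - 1 := by
  have ha : (1 / 2 : ℝ≥0∞).toReal = 1 / 2 := by norm_num
  rw [nuMinus, iqf_twoAtom (by norm_num) (ENNReal.add_halves 1) hq, ha]
  split_ifs <;> ring

lemma iqf_nuF1 {q : ℝ} (hq : q ∈ Icc 0 1) :
    iqf nuF1 q = if q ≤ 1 / 3 then -q else q / 2 - 1 / 2 := by
  have hab : (1 / 3 : ℝ≥0∞) + 2 / 3 = 1 := by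
    rw [ENNReal.div_add_div_same, ENNReal.div_eq_one_iff] <;> norm_num
  have ha : (1 / 3 : ℝ≥0∞).toReal = 1 / 3 := by norm_num [ENNReal.toReal_div]
  rw [nuF1, iqf_twoAtom (by norm_num) hab hq, ha]
  split_ifs <;> ring

lemma ae_eq_or_eq_of_map_eq_bern {Ω : Type*} [MeasurableSpace Ω] {P : Measure Ω} {Y : Ω → ℝ}
    (hY : Measurable Y) (h : P.map Y = bern) : ∀ᵐ ω ∂P, Y ω = 0 ∨ Y ω = 1 := by
  refine ae_of_ae_map (p := fun y ↦ y = 0 ∨ y = 1) hY.aemeasurable ?_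
  simp only [h, bern, ae_add_measure_iff]
  constructor <;> apply Measure.ae_smul_measure <;> simp [ae_dirac_eq]

lemma nuF1_singleton_half_ne_zero : nuF1 {1 / 2} ≠ 0 := by
  simp [nuF1]

/-- first counter-example: `F₁` satisfies the second-order bounds
`Δ⁻ ⪯_SSD F₁ ⪯_SSD Δ⁺` (IQF ordering on `[0,1]`), yet `F₁` is not the law of
`Y₁ − Y₀` for any coupling of two Bernoulli(1/2) marginals. -/
theorem stmt_13 :
    (∀ q ∈ Set.Icc (0:ℝ) 1, iqf nuMinus q ≤ iqf nuF1 q ∧ iqf nuF1 q ≤ iqf nuPlus q) ∧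
      ¬ ∃ (Ω : Type) (mΩ : MeasurableSpace Ω) (P : Measure Ω),
          IsProbabilityMeasure P ∧
          ∃ Y₀ Y₁ : Ω → ℝ, Measurable Y₀ ∧ Measurable Y₁ ∧
            P.map Y₀ = bern ∧ P.map Y₁ = bern ∧
            P.map (fun ω => Y₁ ω - Y₀ ω) = nuF1 := by
  constructor
  · intro q hq
    rw [iqf_nuMinus hq, iqf_nuF1 hq, iqf_nuPlus hq]
    split_ifs <;> constructor <;> linarith [hq.1, hq.2]
  · rintro ⟨Ω, mΩ, P, -, Y₀, Y₁, hY₀, hY₁, hlaw₀, hlaw₁, hlaw⟩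
    have hne : ∀ᵐ ω ∂P, Y₁ ω - Y₀ ω ∉ ({1 / 2} : Set ℝ) := by
      filter_upwards [ae_eq_or_eq_of_map_eq_bern hY₀ hlaw₀,
        ae_eq_or_eq_of_map_eq_bern hY₁ hlaw₁] with ω h₀ h₁
      rcases h₀ with h₀ | h₀ <;> rcases h₁ with h₁ | h₁ <;> norm_num [h₀, h₁]
    apply nuF1_singleton_half_ne_zero
    rw [← hlaw, Measure.map_apply (f := fun ω ↦ Y₁ ω - Y₀ ω) (hY₁.sub hY₀)
      (measurableSet_singleton _)]
    exact measure_eq_zero_iff_ae_notMem.2 hne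
end

section
/- Rank similarity implies conditional comonotonic representation: suppose Y_d = Q_{Y_d}(V_d) for d = 0,1 where V₀, V₁ ∈ [0,1] are random variables that are identically distributed conditional on a σ-algebra G. Then E[Y₁ − Y₀ | G] = E[Q_{Y₁}(V₀) − Q_{Y₀}(V₀) | G] almost surely, provided all quantities are integrable; i.e., the conditional mean treatment effect equals the conditional mean of the comonotonic-rank treatment effect Δ⁺ = Q_{Y₁}(V₀) − Q_{Y₀}(V₀). -/
open MeasureTheory ProbabilityTheory Set

/- The infimum is monotone on the order-connected set of `q` where `S q` is nonempty and bounded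
below, and takes the junk value `0` elsewhere. -/
theorem measurable_sInf_of_antitone {S : ℝ → Set ℝ} (hS : Antitone S) :
    Measurable fun q => sInf (S q) := by
  set I : Set ℝ := {q | BddBelow (S q) ∧ (S q).Nonempty}
  have hI : I.OrdConnected :=
    ⟨fun _ hx _ hy _ hz => ⟨hx.1.mono (hS hz.1), hy.2.mono (hS hz.2)⟩⟩
  refine measurable_of_restrict_of_restrict_compl hI.measurableSet ?_ ?_
  · exact Monotone.measurable fun x y hxy => csInf_le_csInf x.2.1 y.2.2 (hS hxy)
  · convert measurable_const (a := (0 : ℝ))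
    rename_i q
    by_cases hbdd : BddBelow (S q)
    · have hempty : S q = ∅ := not_nonempty_iff_eq_empty.mp fun hne => q.2 ⟨hbdd, hne⟩
      simp [hempty]
    · exact Real.sInf_of_not_bddBelow hbdd

theorem measurable_quantileFn (μ : Measure ℝ) : Measurable (quantileFn μ) :=
  measurable_sInf_of_antitone fun _ _ hqq' _ hx => hqq'.trans hx

theorem stmt_17_general {Ω : Type*} {𝒢 : MeasurableSpace Ω} [mΩ : MeasurableSpace Ω]
    (P : Measure Ω) [IsProbabilityMeasure P]
    (Y₀ Y₁ V₀ V₁ : Ω → ℝ)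
    (hY₀i : Integrable Y₀ P) (hY₁i : Integrable Y₁ P)
    (hQ₀i : Integrable (fun ω => quantileFn (P.map Y₀) (V₀ ω)) P)
    (hQ₁i : Integrable (fun ω => quantileFn (P.map Y₁) (V₀ ω)) P)
    (hsk₀ : Y₀ =ᵐ[P] fun ω => quantileFn (P.map Y₀) (V₀ ω))
    (hsk₁ : Y₁ =ᵐ[P] fun ω => quantileFn (P.map Y₁) (V₁ ω))
    (hrs : ∀ f : ℝ → ℝ, Measurable f →
        Integrable (fun ω => f (V₀ ω)) P → Integrable (fun ω => f (V₁ ω)) P →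
        P[(fun ω => f (V₀ ω)) | 𝒢] =ᵐ[P] P[(fun ω => f (V₁ ω)) | 𝒢]) :
    P[(fun ω => Y₁ ω - Y₀ ω) | 𝒢] =ᵐ[P]
      P[(fun ω => quantileFn (P.map Y₁) (V₀ ω) - quantileFn (P.map Y₀) (V₀ ω)) | 𝒢] := by
  set Q₀ := quantileFn (P.map Y₀)
  set Q₁ := quantileFn (P.map Y₁)
  have hrank : P[(fun ω => Q₁ (V₁ ω)) | 𝒢] =ᵐ[P] P[(fun ω => Q₁ (V₀ ω)) | 𝒢] :=
    (hrs Q₁ (measurable_quantileFn _) hQ₁i (hY₁i.congr hsk₁)).symm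
  calc P[(fun ω => Y₁ ω - Y₀ ω) | 𝒢]
      =ᵐ[P] P[Y₁ | 𝒢] - P[Y₀ | 𝒢] := condExp_sub hY₁i hY₀i _
    _ =ᵐ[P] P[(fun ω => Q₁ (V₁ ω)) | 𝒢] - P[(fun ω => Q₀ (V₀ ω)) | 𝒢] :=
      (condExp_congr_ae hsk₁).sub (condExp_congr_ae hsk₀)
    _ =ᵐ[P] P[(fun ω => Q₁ (V₀ ω)) | 𝒢] - P[(fun ω => Q₀ (V₀ ω)) | 𝒢] :=
      hrank.sub .rfl
    _ =ᵐ[P] P[(fun ω => Q₁ (V₀ ω) - Q₀ (V₀ ω)) | 𝒢] := (condExp_sub hQ₁i hQ₀i _).symm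

/-- rank similarity implies the conditional comonotonic
representation: if `Y_d = Q_{Y_d}(V_d)` a.s. and `V₀, V₁` are identically
distributed conditional on the σ-algebra `𝒢`, then
`E[Y₁ − Y₀ | 𝒢] = E[Q_{Y₁}(V₀) − Q_{Y₀}(V₀) | 𝒢]` almost surely. -/
theorem stmt_17 {Ω : Type*} {𝒢 : MeasurableSpace Ω} [mΩ : MeasurableSpace Ω]
    (P : Measure Ω) [IsProbabilityMeasure P] (h𝒢 : 𝒢 ≤ mΩ)
    (Y₀ Y₁ V₀ V₁ : Ω → ℝ)
    (hY₀m : Measurable Y₀) (hY₁m : Measurable Y₁)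
    (hV₀m : Measurable V₀) (hV₁m : Measurable V₁)
    (hY₀i : Integrable Y₀ P) (hY₁i : Integrable Y₁ P)
    (hQ₀i : Integrable (fun ω => quantileFn (P.map Y₀) (V₀ ω)) P)
    (hQ₁i : Integrable (fun ω => quantileFn (P.map Y₁) (V₀ ω)) P)
    (hsk₀ : Y₀ =ᵐ[P] fun ω => quantileFn (P.map Y₀) (V₀ ω))
    (hsk₁ : Y₁ =ᵐ[P] fun ω => quantileFn (P.map Y₁) (V₁ ω))
    (hrs : ∀ f : ℝ → ℝ, Measurable f →
        Integrable (fun ω => f (V₀ ω)) P → Integrable (fun ω => f (V₁ ω)) P →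
        P[(fun ω => f (V₀ ω)) | 𝒢] =ᵐ[P] P[(fun ω => f (V₁ ω)) | 𝒢]) :
    P[(fun ω => Y₁ ω - Y₀ ω) | 𝒢] =ᵐ[P]
      P[(fun ω => quantileFn (P.map Y₁) (V₀ ω) - quantileFn (P.map Y₀) (V₀ ω)) | 𝒢] :=
  stmt_17_general (mΩ := mΩ) P Y₀ Y₁ V₀ V₁ hY₀i hY₁i hQ₀i hQ₁i hsk₀ hsk₁ hrs
end
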